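/- Let d ≥ 1 and q, Q, (a_n) be as follows: q : (0,∞) → (0,∞) continuous with q(t) = (d/2)^{d/2} π^{-d/2} t^{-d/2-1} + O(t^{-d/2-2}), Q(n) = ∫_{2n}^{2n+2} q(t) dt, a_1 = (2π)^{-1}((d/2)∫_2^∞ q)^{-2/d}, and a_n^{-d/2} − a_{n+1}^{-d/2} = (2π)^{d/2}(d/2)Q(n). Then there exists a constant C = C(d) such that |a_n − 2n/d| ≤ C for all n ≥ 1. -/

import Mathlib

/-!
Telescoping the recursion gives `a_n^{-d/2} = (2π)^{d/2} (d/2) ∫_{2n}^∞ q`. Integrating the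
expansion of `q` shows `x^{d/2} ∫_x^∞ q = (d/2)^{d/2 - 1} π^{-d/2} + O(1/x)`, and the constants
combine to `(a_n / n)^{-d/2} = (d/2)^{d/2} + O(1/n)`. Since `u ↦ u^{-2/d}` is differentiable at
`(d/2)^{d/2}`, inverting the power gives `a_n / n = 2/d + O(1/n)`, i.e. `a_n = 2n/d + O(1)`.
-/

open Real Filter Asymptotics MeasureTheory Set Topology

section TailIntegral

variable {E : Type*} [NormedAddCommGroup E] {f : ℝ → E} {r : ℝ}

theorem ContinuousOn.integrableOn_Ioi_of_isBigO_rpow (hf : ContinuousOn f (Ioi 0))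
    (hO : f =O[atTop] fun t => t ^ (-r)) (hr : 1 < r) {x : ℝ} (hx : 0 < x) :
    IntegrableOn f (Ioi x) := by
  have hloc : LocallyIntegrableOn f (Ici x) :=
    (hf.mono fun t ht => hx.trans_le ht).locallyIntegrableOn measurableSet_Ici
  exact (hloc.integrableOn_of_isBigO_atTop hO
    (integrableAtFilter_rpow_atTop_iff.2 (by linarith))).mono_set Ioi_subset_Ici_self

theorem isBigO_integral_Ioi_rpow [NormedSpace ℝ E] (hO : f =O[atTop] fun t => t ^ (-r))
    (hr : 1 < r) : (fun x => ∫ t in Ioi x, f t) =O[atTop] fun x => x ^ (1 - r) := by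
  obtain ⟨C, hC⟩ := hO.bound
  obtain ⟨T, hT⟩ := eventually_atTop.1 hC
  refine IsBigO.of_bound (C / (r - 1)) ?_
  filter_upwards [eventually_ge_atTop T, eventually_gt_atTop 0] with x hxT hx
  have hbound : ‖∫ t in Ioi x, f t‖ ≤ ∫ t in Ioi x, C * t ^ (-r) := by
    refine norm_integral_le_of_norm_le
      ((integrableOn_Ioi_rpow_of_lt (by linarith) hx).const_mul C) ?_
    refine (ae_restrict_iff' measurableSet_Ioi).2 (ae_of_all _ fun t ht => ?_)
    simpa only [Real.norm_of_nonneg (rpow_nonneg (hx.trans ht).le _)] using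
      hT t (hxT.trans ht.le)
  rw [integral_const_mul, integral_Ioi_rpow_of_lt (by linarith) hx] at hbound
  rw [Real.norm_of_nonneg (rpow_nonneg hx.le _)]
  have hr1 : r - 1 ≠ 0 := by linarith
  convert hbound using 1
  rw [show -r + 1 = 1 - r by ring, show 1 - r = -(r - 1) by ring]
  field_simp

theorem eq_mul_integral_Ioi_of_sub_eq {q : ℝ → ℝ} {b : ℕ → ℝ} {c : ℝ}
    (hint : ∀ x > 0, IntegrableOn q (Ioi x)) (h1 : b 1 = c * ∫ t in Ioi 2, q t)
    (hstep : ∀ n ≥ 1, b n - b (n + 1) = c * ∫ t in (2 * (n : ℝ))..(2 * n + 2), q t) :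
    ∀ n ≥ 1, b n = c * ∫ t in Ioi (2 * (n : ℝ)), q t := by
  intro n hn
  induction n, hn using Nat.le_induction with
  | base => simpa using h1
  | succ n hn ih =>
    have hsplit := intervalIntegral.integral_Ioi_sub_Ioi
      (hint (2 * n) (mul_pos two_pos (Nat.cast_pos.2 hn)))
      (by linarith : 2 * (n : ℝ) ≤ 2 * n + 2)
    rw [show (2 : ℝ) * ((n + 1 : ℕ) : ℝ) = 2 * n + 2 by push_cast; ring]
    linear_combination ih - hstep n hn + c * hsplit

end TailIntegral

section PowerLawTail

variable {q : ℝ → ℝ} {K s : ℝ}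

theorem isBigO_rpow_of_isBigO_sub_rpow
    (hq : (fun t => q t - K * t ^ (-s - 1)) =O[atTop] fun t => t ^ (-s - 2)) :
    q =O[atTop] fun t => t ^ (-(s + 1)) := by
  have hdecay : (fun t : ℝ => t ^ (-s - 2)) =O[atTop] fun t => t ^ (-(s + 1)) := by
    refine IsBigO.of_bound 1 ?_
    filter_upwards [eventually_ge_atTop 1] with t ht
    rw [one_mul, Real.norm_of_nonneg (rpow_nonneg (by linarith) _),
      Real.norm_of_nonneg (rpow_nonneg (by linarith) _)]
    exact rpow_le_rpow_of_exponent_le ht (by linarith)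
  have hmain : (fun t : ℝ => K * t ^ (-s - 1)) =O[atTop] fun t => t ^ (-(s + 1)) :=
    (isBigO_refl _ _).const_mul_left K |>.congr_right fun t => by ring_nf
  simpa using (hq.trans hdecay).add hmain

theorem isBigO_rpow_mul_integral_Ioi_sub (hs : 0 < s) (hint : ∀ x > 0, IntegrableOn q (Ioi x))
    (hq : (fun t => q t - K * t ^ (-s - 1)) =O[atTop] fun t => t ^ (-s - 2)) :
    (fun x => x ^ s * (∫ t in Ioi x, q t) - K / s) =O[atTop] fun x => x⁻¹ := by
  have hmain : ∀ x > 0, ∫ t in Ioi x, K * t ^ (-s - 1) = K / s * x ^ (-s) := by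
    intro x hx
    rw [integral_const_mul, integral_Ioi_rpow_of_lt (by linarith) hx, sub_add_cancel]
    field_simp
  have herr := isBigO_integral_Ioi_rpow (r := s + 2) (hq.congr_right fun t => by ring_nf)
    (by linarith)
  refine ((isBigO_refl (fun x : ℝ => x ^ s) atTop).mul herr).congr' ?_ ?_
  all_goals filter_upwards [eventually_gt_atTop 0] with x hx
  · rw [integral_sub (hint x hx) ((integrableOn_Ioi_rpow_of_lt (by linarith) hx).const_mul K),
      hmain x hx, mul_sub, mul_left_comm, ← rpow_add hx, add_neg_cancel, rpow_zero, mul_one]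
  · rw [← rpow_add hx, show s + (1 - (s + 2)) = -1 by ring, rpow_neg_one]

end PowerLawTail

theorem Asymptotics.IsBigO.comp_const_mul_natCast {f : ℝ → ℝ} {k : ℝ}
    (h : f =O[atTop] fun x => x⁻¹) (hk : 0 < k) :
    (fun n : ℕ => f (k * n)) =O[atTop] fun n => (n : ℝ)⁻¹ :=
  (h.comp_tendsto (tendsto_natCast_atTop_atTop.const_mul_atTop hk)).trans <|
    ((isBigO_refl _ _).const_mul_left k⁻¹).congr_left fun n => (mul_inv k (n : ℝ)).symm

theorem Asymptotics.IsBigO.rpow_sub_rpow {α : Type*} {l : Filter α} {u g : α → ℝ} {c : ℝ}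
    (h : (fun n => u n - c) =O[l] g) (hg : Tendsto g l (𝓝 0)) (hc : c ≠ 0) (e : ℝ) :
    (fun n => u n ^ e - c ^ e) =O[l] g := by
  have hu : Tendsto u l (𝓝 c) := by
    simpa using (h.trans_tendsto hg).add_const c
  exact ((hasDerivAt_rpow_const (p := e) (Or.inl hc)).isBigO_sub.comp_tendsto hu).trans h

theorem isBigO_sub_mul_of_isBigO_div_rpow_sub {a : ℕ → ℝ} {s L : ℝ} (hs : s ≠ 0)
    (hL : 0 < L) (ha : ∀ᶠ n in atTop, 0 ≤ a n)
    (h : (fun n : ℕ => (a n / n) ^ (-s) - L ^ (-s)) =O[atTop] fun n => (n : ℝ)⁻¹) :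
    (fun n : ℕ => a n - L * n) =O[atTop] fun _ => (1 : ℝ) := by
  have hinv : (-s) * (-s⁻¹) = 1 := by field_simp
  have hratio : (fun n : ℕ => a n / n - L) =O[atTop] fun n => (n : ℝ)⁻¹ := by
    refine (h.rpow_sub_rpow tendsto_inv_atTop_nhds_zero_nat (rpow_pos_of_pos hL _).ne'
      (-s⁻¹)).congr' ?_ EventuallyEq.rfl
    filter_upwards [ha] with n hn
    rw [← rpow_mul (by positivity), ← rpow_mul hL.le, hinv, rpow_one, rpow_one]
  refine ((isBigO_refl (fun n : ℕ => (n : ℝ)) atTop).mul hratio).congr' ?_ ?_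
  all_goals
    filter_upwards [eventually_ne_atTop 0] with n hn
    have hn' : (n : ℝ) ≠ 0 := Nat.cast_ne_zero.2 hn
    field_simp

/-- Lemma 3.1 of the paper: With `Q(n) = ∫_{2n}^{2n+2} q(t) dt`,
`a_1 = (2π)^{-1} ((d/2) ∫_2^∞ q)^{-2/d}` and
`a_n^{-d/2} - a_{n+1}^{-d/2} = (2π)^{d/2} (d/2) Q(n)`, one has
`|a_n - 2n/d| ≤ C(d)` for all `n ≥ 1`. -/
theorem an_key_asymptotics (d : ℕ) (hd : 1 ≤ d) (q : ℝ → ℝ)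
    (hq_pos : ∀ t > (0:ℝ), 0 < q t) (hq_cont : ContinuousOn q (Ioi 0))
    (hq_asymp : (fun t : ℝ =>
        q t - ((d : ℝ) / 2) ^ ((d : ℝ) / 2) * π ^ (-(d : ℝ) / 2) * t ^ (-(d : ℝ) / 2 - 1))
      =O[atTop] fun t : ℝ => t ^ (-(d : ℝ) / 2 - 2))
    (Q : ℕ → ℝ) (hQ : ∀ n : ℕ, Q n = ∫ t in (2 * (n : ℝ))..(2 * (n : ℝ) + 2), q t)
    (a : ℕ → ℝ) (ha_pos : ∀ n ≥ 1, 0 < a n)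
    (ha1 : a 1 = (2 * π)⁻¹ * (((d : ℝ) / 2) * ∫ t in Ici (2 : ℝ), q t) ^ (-(2 : ℝ) / d))
    (ha_rec : ∀ n ≥ 1,
      a n ^ (-(d : ℝ) / 2) - a (n + 1) ^ (-(d : ℝ) / 2)
        = (2 * π) ^ ((d : ℝ) / 2) * ((d : ℝ) / 2) * Q n) :
    ∃ C : ℝ, ∀ n ≥ 1, |a n - 2 * (n : ℝ) / (d : ℝ)| ≤ C := by
  rw [neg_div] at hq_asymp
  simp only [neg_div, hQ] at ha_rec
  set p : ℝ := (d : ℝ) / 2 with hp_def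
  set K : ℝ := p ^ p * π ^ (-p)
  set c : ℝ := (2 * π) ^ p * p
  set I : ℝ → ℝ := fun x => ∫ t in Ioi x, q t
  have hp : 0 < p := by positivity
  have hq_int : ∀ x > 0, IntegrableOn q (Ioi x) := fun x hx =>
    hq_cont.integrableOn_Ioi_of_isBigO_rpow (isBigO_rpow_of_isBigO_sub_rpow hq_asymp)
      (by linarith) hx
  have ha_one : a 1 ^ (-p) = c * I 2 := by
    have hI2 : 0 ≤ p * I 2 := mul_nonneg hp.le <|
      setIntegral_nonneg measurableSet_Ioi fun t ht => (hq_pos t (by linarith [mem_Ioi.1 ht])).le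
    have hexp : -(2 : ℝ) / d * -p = 1 := by rw [hp_def]; field_simp
    rw [ha1, integral_Ici_eq_integral_Ioi, mul_rpow (by positivity) (rpow_nonneg hI2 _),
      inv_rpow (by positivity), ← rpow_neg (by positivity), neg_neg, ← rpow_mul hI2, hexp,
      rpow_one]
    ring
  have ha_tail : ∀ n ≥ 1, a n ^ (-p) = c * I (2 * n) :=
    eq_mul_integral_Ioi_of_sub_eq hq_int ha_one ha_rec
  have hconst : c * 2 ^ (-p) * (K / p) = (2 / d) ^ (-p) := by
    rw [show (2 : ℝ) / d = p⁻¹ by rw [hp_def, inv_div], inv_rpow hp.le, rpow_neg hp.le,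
      inv_inv]
    simp only [c, K]
    rw [mul_rpow two_pos.le pi_pos.le, rpow_neg two_pos.le, rpow_neg pi_pos.le]
    field_simp
  have hI_tail : (fun x => x ^ p * I x - K / p) =O[atTop] fun x => x⁻¹ :=
    isBigO_rpow_mul_integral_Ioi_sub hp hq_int hq_asymp
  have hrate : (fun n : ℕ => (a n / n) ^ (-p) - (2 / d) ^ (-p)) =O[atTop]
      fun n => (n : ℝ)⁻¹ := by
    refine ((hI_tail.comp_const_mul_natCast two_pos).const_mul_left (c * 2 ^ (-p))).congr' ?_
      EventuallyEq.rfl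
    filter_upwards [eventually_ge_atTop 1] with n hn
    rw [div_rpow (ha_pos n hn).le n.cast_nonneg, ha_tail n hn, rpow_neg n.cast_nonneg,
      div_inv_eq_mul, ← hconst, mul_rpow two_pos.le n.cast_nonneg, rpow_neg two_pos.le]
    field_simp
  obtain ⟨C, hC⟩ := isBigO_one_nat_atTop_iff.1 <|
    isBigO_sub_mul_of_isBigO_div_rpow_sub hp.ne' (by positivity)
      (eventually_atTop.2 ⟨1, fun n hn => (ha_pos n hn).le⟩) hrate
  exact ⟨C, fun n _ => by simpa [mul_div_right_comm] using hC n⟩
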